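/- Let f : ℤ → ℝ be nonnegative and of bounded variation, and let α ≥ 1/3. Let p < r < q be integers such that 𝓜^α f(p) < 𝓜^α f(r) > 𝓜^α f(q) and 𝓜^α f(y) ≤ 𝓜^α f(r) for every integer y with p ≤ y ≤ q. Then there exists an integer m' with p < m' < q such that f(m') = 𝓜^α f(m') = 𝓜^α f(r), and 𝓜^α f(i) = 𝓜^α f(r) for every integer i lying between r and m'. -/

import Mathlib

open scoped ENNReal

/-- The discrete nontangential Hardy–Littlewood maximal function:
`𝓜^α f(x) = sup { (1/(2R+1)) Σ_{i=y−R}^{y+R} f(i) : R ∈ ℕ, y ∈ ℤ, |x − y| ≤ ⌈αR⌉ }`. -/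
noncomputable def dntMax (α : ℝ) (f : ℤ → ℝ) (x : ℤ) : ℝ :=
  sSup { a : ℝ | ∃ R : ℕ, ∃ y : ℤ, |x - y| ≤ ⌈α * (R : ℝ)⌉ ∧
    a = (1 / (2 * (R : ℝ) + 1)) * ∑ i ∈ Finset.Icc (y - (R : ℤ)) (y + (R : ℤ)), f i }

/-- The total variation of a discrete function `g : ℤ → ℝ`,
`Var(g) = Σ_{i∈ℤ} |g(i+1) − g(i)|`, valued in `ℝ≥0∞`. -/
noncomputable def dVar (g : ℤ → ℝ) : ℝ≥0∞ :=
  ∑' i : ℤ, ENNReal.ofReal |g (i + 1) - g i|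

namespace DNTAux

def S (α : ℝ) (f : ℤ → ℝ) (x : ℤ) : Set ℝ :=
  { a : ℝ | ∃ R : ℕ, ∃ y : ℤ, |x - y| ≤ ⌈α * (R : ℝ)⌉ ∧
    a = (1 / (2 * (R : ℝ) + 1)) * ∑ i ∈ Finset.Icc (y - (R : ℤ)) (y + (R : ℤ)), f i }

lemma dntMax_eq_sSup (α : ℝ) (f : ℤ → ℝ) (x : ℤ) : dntMax α f x = sSup (S α f x) := rfl

lemma exists_bound {f : ℤ → ℝ} (hf0 : ∀ n, 0 ≤ f n) (hbv : dVar f ≠ ⊤) :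
    ∃ K : ℝ, 0 ≤ K ∧ ∀ n, f n ≤ K := by
  have htR : (0:ℝ) ≤ (dVar f).toReal := ENNReal.toReal_nonneg
  refine ⟨f 0 + (dVar f).toReal, by linarith [hf0 0], ?_⟩
  intro n
  have key : ∀ (k : ℕ) (m : ℤ), ENNReal.ofReal |f (m + k) - f m| ≤ dVar f := by
    intro k m
    have step : ∀ k : ℕ, ENNReal.ofReal |f (m + k) - f m| ≤
        ∑ j ∈ Finset.range k, ENNReal.ofReal |f (m + j + 1) - f (m + j)| := by
      intro k
      induction k with
      | zero => simp
      | succ k ih =>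
        have tri : |f (m + ((k:ℤ)+1)) - f m| ≤ |f (m + k + 1) - f (m + k)| + |f (m + k) - f m| := by
          have h := abs_sub_le (f (m + k + 1)) (f (m + k)) (f m)
          have e : m + ((k:ℤ)+1) = m + k + 1 := by ring
          rw [e]
          exact h
        have e2 : ((k+1 : ℕ) : ℤ) = (k:ℤ) + 1 := by push_cast; ring
        rw [e2, Finset.sum_range_succ]
        calc ENNReal.ofReal |f (m + ((k:ℤ)+1)) - f m|
            ≤ ENNReal.ofReal (|f (m + k + 1) - f (m + k)| + |f (m + k) - f m|) :=
              ENNReal.ofReal_le_ofReal tri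
          _ ≤ ENNReal.ofReal |f (m + k + 1) - f (m + k)| + ENNReal.ofReal |f (m + k) - f m| :=
              ENNReal.ofReal_add_le
          _ ≤ ENNReal.ofReal |f (m + k + 1) - f (m + k)| +
              ∑ j ∈ Finset.range k, ENNReal.ofReal |f (m + j + 1) - f (m + j)| := by
              exact add_le_add le_rfl ih
          _ = _ := by ring
    refine (step k).trans ?_
    have himg : ∑ j ∈ Finset.range k, ENNReal.ofReal |f (m + j + 1) - f (m + j)|
        = ∑ i ∈ (Finset.range k).image (fun j : ℕ => m + (j:ℤ)),
            ENNReal.ofReal |f (i + 1) - f i| := by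
      rw [Finset.sum_image (by intro a _ b _ h; have h' : m + (a:ℤ) = m + (b:ℤ) := h; omega)]
    rw [himg]
    exact ENNReal.sum_le_tsum _
  have habs : |f n - f 0| ≤ (dVar f).toReal := by
    have h2 : ENNReal.ofReal |f n - f 0| ≤ dVar f := by
      rcases le_or_gt 0 n with h | h
      · have := key n.toNat 0
        rwa [zero_add, Int.toNat_of_nonneg h] at this
      · have := key (-n).toNat n
        rw [Int.toNat_of_nonneg (by omega), add_neg_cancel, abs_sub_comm] at this
        exact this
    exact (ENNReal.ofReal_le_iff_le_toReal hbv).mp h2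
  have := (abs_le.mp habs).2
  linarith

variable {α : ℝ} {f : ℤ → ℝ}

lemma card_Icc2 (y : ℤ) (R : ℕ) : (Finset.Icc (y - (R:ℤ)) (y + (R:ℤ))).card = 2 * R + 1 := by
  rw [Int.card_Icc]; omega

lemma S_nonempty (x : ℤ) : (S α f x).Nonempty := by
  refine ⟨f x, 0, x, by simp, ?_⟩
  simp

lemma ub_S {K : ℝ} (hK : ∀ n, f n ≤ K) (x : ℤ) : ∀ a ∈ S α f x, a ≤ K := by
  rintro a ⟨R, y, -, rfl⟩
  have hpos : (0:ℝ) < 2 * (R:ℝ) + 1 := by positivity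
  have hsum : ∑ i ∈ Finset.Icc (y - (R:ℤ)) (y + (R:ℤ)), f i ≤ (2 * (R:ℝ) + 1) * K := by
    calc ∑ i ∈ Finset.Icc (y - (R:ℤ)) (y + (R:ℤ)), f i
        ≤ (Finset.Icc (y - (R:ℤ)) (y + (R:ℤ))).card • K :=
          Finset.sum_le_card_nsmul _ _ _ (fun i _ => hK i)
      _ = (2 * (R:ℝ) + 1) * K := by rw [card_Icc2, nsmul_eq_mul]; push_cast; ring
  rw [one_div]
  calc (2 * (R:ℝ) + 1)⁻¹ * ∑ i ∈ Finset.Icc (y - (R:ℤ)) (y + (R:ℤ)), f i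
      ≤ (2 * (R:ℝ) + 1)⁻¹ * ((2 * (R:ℝ) + 1) * K) := by
        exact mul_le_mul_of_nonneg_left hsum (by positivity)
    _ = K := by field_simp

lemma avg_le_dntMax {x : ℤ} (hbdd : BddAbove (S α f x)) {R : ℕ} {y : ℤ}
    (h : |x - y| ≤ ⌈α * (R : ℝ)⌉) :
    (1 / (2 * (R : ℝ) + 1)) * ∑ i ∈ Finset.Icc (y - (R : ℤ)) (y + (R : ℤ)), f i
      ≤ dntMax α f x :=
  le_csSup hbdd ⟨R, y, h, rfl⟩

lemma f_le_dntMax {x : ℤ} (hbdd : BddAbove (S α f x)) : f x ≤ dntMax α f x := by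
  have h := avg_le_dntMax (x := x) hbdd (R := 0) (y := x) (by simp)
  simpa using h

lemma ceil_third (hα : 1/3 ≤ α) {n s : ℤ} (hs : 0 ≤ s) (h : 3 * n ≤ s + 2) :
    n ≤ ⌈α * (s : ℝ)⌉ := by
  have hs' : (0:ℝ) ≤ (s:ℝ) := by exact_mod_cast hs
  have h13 : (1/3 : ℝ) * s ≤ α * s := mul_le_mul_of_nonneg_right hα hs'
  have h3 : ((3 * n : ℤ) : ℝ) ≤ (s:ℝ) + 2 := by exact_mod_cast h
  have key : ((n - 1 : ℤ):ℝ) < α * (s:ℝ) := by push_cast at h3 ⊢; linarith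
  have := Int.lt_ceil.mpr key
  omega

lemma ceil_nn {R : ℝ} (hα : 1/3 ≤ α) (hR : 0 ≤ R) : 0 ≤ ⌈α * R⌉ :=
  Int.ceil_nonneg (mul_nonneg (by linarith) hR)

lemma le_three_ceil (hα : 1/3 ≤ α) (R : ℕ) : (R : ℤ) ≤ 3 * ⌈α * (R:ℝ)⌉ := by
  have h1 : α * (R:ℝ) ≤ ⌈α * (R:ℝ)⌉ := Int.le_ceil _
  have h2 : (1/3:ℝ) * R ≤ α * R := mul_le_mul_of_nonneg_right hα (by positivity)
  have : (R:ℝ) ≤ 3 * (⌈α * (R:ℝ)⌉ : ℝ) := by linarith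
  exact_mod_cast this

lemma block_le (hbdd : ∀ x : ℤ, BddAbove (S α f x)) {M : ℝ} {a s x : ℤ} (hs : 0 ≤ s)
    (hx : |x - (a + s)| ≤ ⌈α * (s : ℝ)⌉) (hM : dntMax α f x ≤ M) :
    ∑ i ∈ Finset.Icc a (a + 2 * s), f i ≤ (2 * (s : ℝ) + 1) * M := by
  have h1 : ((s.toNat : ℤ)) = s := Int.toNat_of_nonneg hs
  have h2 : ((s.toNat : ℕ) : ℝ) = (s : ℝ) := by exact_mod_cast h1
  have hmem := avg_le_dntMax (x := x) (hbdd x) (R := s.toNat) (y := a + s) (by rw [h2]; exact hx)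
  rw [h1] at hmem
  have e1 : a + s - s = a := by ring
  have e2 : a + s + s = a + 2*s := by ring
  rw [e1, e2, h2] at hmem
  have hle := hmem.trans hM
  have hs' : (0:ℝ) ≤ (s:ℝ) := by exact_mod_cast hs
  have hpos : (0:ℝ) < 2 * (s:ℝ) + 1 := by linarith
  rw [one_div] at hle
  calc ∑ i ∈ Finset.Icc a (a + 2 * s), f i
      = (2 * (s:ℝ) + 1) * ((2 * (s:ℝ) + 1)⁻¹ * ∑ i ∈ Finset.Icc a (a + 2 * s), f i) := by
        field_simp
    _ ≤ (2 * (s:ℝ) + 1) * M := mul_le_mul_of_nonneg_left hle (by positivity)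

lemma sum_Ico_split (f : ℤ → ℝ) {a b c : ℤ} (h1 : a ≤ b) (h2 : b ≤ c) :
    ∑ i ∈ Finset.Ico a b, f i + ∑ i ∈ Finset.Ico b c, f i = ∑ i ∈ Finset.Ico a c, f i := by
  rw [← Finset.sum_union (Finset.Ico_disjoint_Ico_consecutive a b c),
    Finset.Ico_union_Ico_eq_Ico h1 h2]

lemma Ico_succ_Icc (a b : ℤ) : Finset.Ico a (b+1) = Finset.Icc a b := by
  ext i; simp only [Finset.mem_Ico, Finset.mem_Icc]; omega

end DNTAux

/-- If `p < r < q` is a peak for `𝓜^α f` on which `r` maximizes `𝓜^α f`, then there is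
`m' ∈ (p, q)` with `f(m') = 𝓜^α f(m') = 𝓜^α f(r)`, and `𝓜^α f` is constantly equal to
`𝓜^α f(r)` between `r` and `m'`. -/
theorem dntMax_attained (f : ℤ → ℝ) (hf0 : ∀ n, 0 ≤ f n) (hbv : dVar f ≠ ⊤)
    (α : ℝ) (hα : 1 / 3 ≤ α) (p r q : ℤ) (hpr : p < r) (hrq : r < q)
    (h1 : dntMax α f p < dntMax α f r) (h2 : dntMax α f q < dntMax α f r)
    (h3 : ∀ y : ℤ, p ≤ y → y ≤ q → dntMax α f y ≤ dntMax α f r) :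
    ∃ m' : ℤ, p < m' ∧ m' < q ∧
      f m' = dntMax α f m' ∧ dntMax α f m' = dntMax α f r ∧
      ∀ i : ℤ, min r m' ≤ i → i ≤ max r m' → dntMax α f i = dntMax α f r := by
  classical
  obtain ⟨K, hK0, hK⟩ := DNTAux.exists_bound hf0 hbv
  have hbdd : ∀ x : ℤ, BddAbove (DNTAux.S α f x) :=
    fun x => ⟨K, fun a ha => DNTAux.ub_S hK x a ha⟩
  set M := dntMax α f r with hMdef
  set ε : ℝ := min (M - dntMax α f p) (M - dntMax α f q) with hεdef
  have hε0 : 0 < ε := lt_min (by linarith) (by linarith)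
  -- cone lemma
  have cone : ∀ (R : ℕ) (y : ℤ), |r - y| ≤ ⌈α * (R:ℝ)⌉ →
      M - ε < (1/(2*(R:ℝ)+1)) * ∑ i ∈ Finset.Icc (y - (R:ℤ)) (y + (R:ℤ)), f i →
      p ≤ y - ⌈α * (R:ℝ)⌉ - 1 ∧ y + ⌈α * (R:ℝ)⌉ + 1 ≤ q := by
    intro R y hry hgt
    have hp' : ¬ (|p - y| ≤ ⌈α * (R:ℝ)⌉) := by
      intro hcon
      have hle := DNTAux.avg_le_dntMax (x := p) (hbdd p) (R := R) (y := y) hcon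
      have hεle : ε ≤ M - dntMax α f p := min_le_left _ _
      linarith
    have hq' : ¬ (|q - y| ≤ ⌈α * (R:ℝ)⌉) := by
      intro hcon
      have hle := DNTAux.avg_le_dntMax (x := q) (hbdd q) (R := R) (y := y) hcon
      have hεle : ε ≤ M - dntMax α f q := min_le_right _ _
      linarith
    rw [abs_le] at hry
    rw [abs_le, not_and_or, not_le, not_le] at hp' hq'
    omega
  -- attainment of the supremum at r with cone inside (p,q)
  have hQP : (2:ℤ) ≤ q - p := by omega
  set N : ℕ := (3 * (q - p)).toNat with hNdef
  set T : Finset ℝ := ((Finset.range (N+1) ×ˢ Finset.Icc (r - (q-p)) (r + (q-p))).filter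
      (fun Ry : ℕ × ℤ => |r - Ry.2| ≤ ⌈α * (Ry.1 : ℝ)⌉)).image
      (fun Ry : ℕ × ℤ => (1 / (2 * (Ry.1 : ℝ) + 1)) *
        ∑ i ∈ Finset.Icc (Ry.2 - (Ry.1:ℤ)) (Ry.2 + (Ry.1:ℤ)), f i) with hTdef
  have hTne : T.Nonempty := by
    refine ⟨_, Finset.mem_image.mpr ⟨(0, r), Finset.mem_filter.mpr
      ⟨Finset.mem_product.mpr ⟨Finset.mem_range.mpr (by omega),
        Finset.mem_Icc.mpr (by omega)⟩, by simp⟩, rfl⟩⟩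
  have hTle : ∀ b ∈ T, b ≤ M := by
    intro b hb
    obtain ⟨⟨R, y⟩, hmem, rfl⟩ := Finset.mem_image.mp hb
    have hcond := (Finset.mem_filter.mp hmem).2
    exact DNTAux.avg_le_dntMax (hbdd r) hcond
  have hM₁le : T.max' hTne ≤ M := hTle _ (T.max'_mem hTne)
  have hM₁eq : T.max' hTne = M := by
    by_contra hne
    have hlt : T.max' hTne < M := lt_of_le_of_ne hM₁le hne
    set ε' := min ε (M - T.max' hTne) with hε'def
    have hε'0 : 0 < ε' := lt_min hε0 (by linarith)
    have hssup : M - ε' < sSup (DNTAux.S α f r) := by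
      rw [← DNTAux.dntMax_eq_sSup]; rw [← hMdef]; linarith
    obtain ⟨a, ha, hagt⟩ := exists_lt_of_lt_csSup (DNTAux.S_nonempty r) hssup
    obtain ⟨R, y, hry, rfl⟩ := ha
    have hε'ε : ε' ≤ ε := min_le_left _ _
    have hgt : M - ε < (1/(2*(R:ℝ)+1)) * ∑ i ∈ Finset.Icc (y - (R:ℤ)) (y + (R:ℤ)), f i := by
      linarith
    obtain ⟨hcp, hcq⟩ := cone R y hry hgt
    have hc3 := DNTAux.le_three_ceil hα R
    have hc0 : 0 ≤ ⌈α * (R:ℝ)⌉ := DNTAux.ceil_nn hα (by positivity)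
    have habs := abs_le.mp hry
    have hRN : R ∈ Finset.range (N+1) := by
      refine Finset.mem_range.mpr ?_
      have hr3 : (R:ℤ) ≤ 3 * (q - p) := by omega
      omega
    have hyIcc : y ∈ Finset.Icc (r - (q-p)) (r + (q-p)) := Finset.mem_Icc.mpr (by omega)
    have hmemT : (1/(2*(R:ℝ)+1)) * ∑ i ∈ Finset.Icc (y - (R:ℤ)) (y + (R:ℤ)), f i ∈ T :=
      Finset.mem_image.mpr ⟨(R, y), Finset.mem_filter.mpr
        ⟨Finset.mem_product.mpr ⟨hRN, hyIcc⟩, hry⟩, rfl⟩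
    have hle := T.le_max' _ hmemT
    have hε'2 : ε' ≤ M - T.max' hTne := min_le_right _ _
    linarith
  have hMinT : M ∈ T := by rw [← hM₁eq]; exact T.max'_mem hTne
  obtain ⟨⟨R, y⟩, hmem, havg⟩ := Finset.mem_image.mp hMinT
  dsimp only at havg
  have hry : |r - y| ≤ ⌈α * (R:ℝ)⌉ := (Finset.mem_filter.mp hmem).2
  obtain ⟨hcp, hcq⟩ := cone R y hry (by rw [havg]; linarith)
  -- notation
  have hc3 := DNTAux.le_three_ceil hα R
  have hc0 : 0 ≤ ⌈α * (R:ℝ)⌉ := DNTAux.ceil_nn hα (by positivity)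
  have habs := abs_le.mp hry
  have hfle : ∀ x : ℤ, p ≤ x → x ≤ q → f x ≤ M :=
    fun x hx hx' => (DNTAux.f_le_dntMax (hbdd x)).trans (h3 x hx hx')
  have hpos : (0:ℝ) < 2*(R:ℝ)+1 := by positivity
  have htot : ∑ i ∈ Finset.Icc (y - (R:ℤ)) (y + (R:ℤ)), f i = (2*(R:ℝ)+1) * M := by
    rw [← havg]; field_simp
  -- key claim : M ≤ f y
  have hfy : M ≤ f y := by
    by_contra hfy
    push_neg at hfy
    set c : ℤ := ⌈α * (R:ℝ)⌉ with hcdef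
    set A : ℤ := y - (R:ℤ) with hAdef
    set B : ℤ := y + (R:ℤ) with hBdef
    set bL : ℤ := if p ≤ A then A - 1 else A + 2 * ((3*(p - A) + 1) / 4) with hbLdef
    set aR : ℤ := if B ≤ q then B + 1 else B - 2 * ((3*(B - q) + 1) / 4) with haRdef
    have hbLf : A - 1 ≤ bL ∧ bL ≤ y - 1 ∧ p - 1 ≤ bL := by
      rw [hbLdef]; split_ifs with h <;> omega
    have haRf : aR ≤ B + 1 ∧ y + 1 ≤ aR ∧ aR ≤ q + 1 := by
      rw [haRdef]; split_ifs with h <;> omega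
    -- S1
    have hS1 : ∑ i ∈ Finset.Ico A (bL+1), f i ≤ ((bL+1-A : ℤ) : ℝ) * M := by
      by_cases hA : p ≤ A
      · have hbLA : bL = A - 1 := by rw [hbLdef, if_pos hA]
        rw [hbLA]
        norm_num
      · push_neg at hA
        set s : ℤ := (3*(p - A) + 1) / 4 with hsdef
        have hs1 : 1 ≤ s := by omega
        have hbLA : bL = A + 2*s := by rw [hbLdef, if_neg (by omega)]
        have hxcone : |max p (A+s) - (A + s)| ≤ ⌈α * ((s:ℤ) : ℝ)⌉ := by
          rcases le_or_gt p (A+s) with h | h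
          · rw [max_eq_right h, sub_self, abs_zero]
            exact DNTAux.ceil_nn hα (by exact_mod_cast (by omega : (0:ℤ) ≤ s))
          · rw [max_eq_left h.le, abs_of_pos (by omega)]
            exact DNTAux.ceil_third hα (by omega) (by omega)
        have hxle : dntMax α f (max p (A+s)) ≤ M := by
          rcases le_or_gt p (A+s) with h | h
          · rw [max_eq_right h]
            exact h3 _ h (by omega)
          · rw [max_eq_left h.le]
            exact h1.le
        have hblock := DNTAux.block_le (f := f) hbdd (a := A) (s := s)
          (x := max p (A+s)) (by omega) hxcone hxle
        have hIem : Finset.Ico A (bL+1) = Finset.Icc A (A+2*s) := by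
          rw [hbLA, DNTAux.Ico_succ_Icc]
        have hco : ((bL+1-A : ℤ) : ℝ) = 2*(s:ℝ)+1 := by
          rw [hbLA]; push_cast; ring
        rw [hIem, hco]
        exact hblock
    -- S3
    have hS3 : ∑ i ∈ Finset.Ico aR (B+1), f i ≤ ((B+1-aR : ℤ) : ℝ) * M := by
      by_cases hB : B ≤ q
      · have haRB : aR = B + 1 := by rw [haRdef, if_pos hB]
        rw [haRB]
        norm_num
      · push_neg at hB
        set s : ℤ := (3*(B - q) + 1) / 4 with hsdef
        have hs1 : 1 ≤ s := by omega
        have haRB : aR = B - 2*s := by rw [haRdef, if_neg (by omega)]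
        have hxcone : |min q (aR+s) - (aR + s)| ≤ ⌈α * ((s:ℤ) : ℝ)⌉ := by
          rcases le_or_gt (aR+s) q with h | h
          · rw [min_eq_right h, sub_self, abs_zero]
            exact DNTAux.ceil_nn hα (by exact_mod_cast (by omega : (0:ℤ) ≤ s))
          · rw [min_eq_left h.le, abs_of_neg (by omega), neg_sub]
            exact DNTAux.ceil_third hα (by omega) (by omega)
        have hxle : dntMax α f (min q (aR+s)) ≤ M := by
          rcases le_or_gt (aR+s) q with h | h
          · rw [min_eq_right h]
            refine h3 _ ?_ h
            omega
          · rw [min_eq_left h.le]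
            exact h2.le
        have hblock := DNTAux.block_le (f := f) hbdd (a := aR) (s := s)
          (x := min q (aR+s)) (by omega) hxcone hxle
        have hIem : Finset.Ico aR (B+1) = Finset.Icc aR (aR+2*s) := by
          rw [DNTAux.Ico_succ_Icc]
          congr 1
          omega
        have hco : ((B+1-aR : ℤ) : ℝ) = 2*(s:ℝ)+1 := by
          rw [haRB]; push_cast; ring
        rw [hIem, hco]
        exact hblock
    -- S2 strict
    have hS2 : ∑ i ∈ Finset.Ico (bL+1) aR, f i < ((aR - (bL+1) : ℤ) : ℝ) * M := by
      have hsub : ∀ i ∈ Finset.Ico (bL+1) aR, f i ≤ M := by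
        intro i hi
        rw [Finset.mem_Ico] at hi
        exact hfle i (by omega) (by omega)
      have hymem : y ∈ Finset.Ico (bL+1) aR := Finset.mem_Ico.mpr (by omega)
      have hlt := Finset.sum_lt_sum (f := f) (g := fun _ => M) hsub ⟨y, hymem, hfy⟩
      rw [Finset.sum_const, nsmul_eq_mul] at hlt
      have hcard : (((Finset.Ico (bL+1) aR).card : ℕ) : ℝ) = ((aR - (bL+1) : ℤ) : ℝ) := by
        rw [Int.card_Ico]
        exact_mod_cast Int.toNat_of_nonneg (by omega)
      rwa [hcard] at hlt
    -- assemble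
    have e1 : ∑ i ∈ Finset.Ico A (bL+1), f i + ∑ i ∈ Finset.Ico (bL+1) aR, f i
        = ∑ i ∈ Finset.Ico A aR, f i := DNTAux.sum_Ico_split f (by omega) (by omega)
    have e2 : ∑ i ∈ Finset.Ico A aR, f i + ∑ i ∈ Finset.Ico aR (B+1), f i
        = ∑ i ∈ Finset.Ico A (B+1), f i := DNTAux.sum_Ico_split f (by omega) (by omega)
    have e3 : Finset.Ico A (B+1) = Finset.Icc A B := DNTAux.Ico_succ_Icc A B
    have htot' : ∑ i ∈ Finset.Ico A (B+1), f i = (2*(R:ℝ)+1) * M := by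
      rw [e3]
      exact htot
    have hcoef : ((bL+1-A : ℤ) : ℝ) + ((aR - (bL+1) : ℤ) : ℝ) + ((B+1-aR : ℤ) : ℝ)
        = 2*(R:ℝ)+1 := by
      have : (bL+1-A) + (aR - (bL+1)) + (B+1-aR) = 2*(R:ℤ)+1 := by omega
      exact_mod_cast congrArg (Int.cast : ℤ → ℝ) this
    have hfin : (2*(R:ℝ)+1) * M
        = ((bL+1-A : ℤ) : ℝ)*M + ((aR - (bL+1) : ℤ) : ℝ)*M + ((B+1-aR : ℤ) : ℝ)*M := by
      rw [← hcoef]; ring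
    linarith
  -- conclusion
  have hyp : p < y := by omega
  have hyq : y < q := by omega
  have hy3 : dntMax α f y ≤ M := h3 y (by omega) (by omega)
  have hyavg : M ≤ dntMax α f y := by
    have hle := DNTAux.avg_le_dntMax (x := y) (hbdd y) (R := R) (y := y)
      (by rw [sub_self, abs_zero]; exact hc0)
    rw [havg] at hle
    exact hle
  have hMy : dntMax α f y = M := le_antisymm hy3 hyavg
  have hfyle : f y ≤ dntMax α f y := DNTAux.f_le_dntMax (hbdd y)
  have hfyeq : f y = dntMax α f y := le_antisymm hfyle (by rw [hMy]; exact hfy)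
  refine ⟨y, hyp, hyq, hfyeq, hMy, ?_⟩
  intro i hi1 hi2
  have hiy : |i - y| ≤ ⌈α * (R:ℝ)⌉ := by
    rw [abs_le]
    constructor <;>
    · rcases le_total r y with h | h <;> simp [min_def, max_def, h] at hi1 hi2 <;> omega
  have hipq1 : p ≤ i := by
    rcases le_total r y with h | h <;> simp [min_def, max_def, h] at hi1 hi2 <;> omega
  have hipq2 : i ≤ q := by
    rcases le_total r y with h | h <;> simp [min_def, max_def, h] at hi1 hi2 <;> omega
  have hle := DNTAux.avg_le_dntMax (x := i) (hbdd i) (R := R) (y := y) hiy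
  rw [havg] at hle
  exact le_antisymm (h3 i hipq1 hipq2) hle
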